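/- If a Boolean function f : {0,1}^n → {0,1} is computed by a shuffling two-way nondeterministic automaton 2NA^Θ_n of size d (for some permutation θ of {1,…,n}), then N(f) ≤ 2^{(d+1)^2}. -/

import Mathlib

/-! ## Basic machinery for nonuniform two-way automata -/

/-- Head directions: left, stay, right. -/
inductive Dir : Type
  | L | S | R
  deriving DecidableEq

instance instFintypeDir : Fintype Dir :=
  ⟨{Dir.L, Dir.S, Dir.R}, by intro x; cases x <;> simp⟩

/-- Move a head position (0-based tape square) in a direction. -/
def movePos (p : ℕ) : Dir → ℕ
  | Dir.L => p - 1
  | Dir.S => p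
  | Dir.R => p + 1

/-- Read the bit of an input of length `n` at (0-based) position `p`
(dummy value `false` out of range; well-formed machines never read out of range). -/
def readBit {n : ℕ} (u : Fin n → Bool) (p : ℕ) : Bool :=
  if h : p < n then u ⟨p, h⟩ else false

/-- A nonuniform head-position-dependent two-way deterministic automaton `2DA_n`
with `d` states, for inputs of length `n`.  The input is on (0-based) squares
`0, …, n-1`; the transition function may differ on each square; the head never
leaves the input; the accepting/rejecting states can only be entered when
reading the rightmost square. -/
structure TwoDA (n d : ℕ) where
  start : Fin d
  acc : Fin d
  rej : Fin d
  acc_ne_rej : acc ≠ rej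
  δ : ℕ → Fin d → Bool → Fin d × Dir
  noLeft : ∀ s b, (δ 0 s b).2 ≠ Dir.L
  noRight : ∀ s b, (δ (n - 1) s b).2 ≠ Dir.R
  haltRight : ∀ i s b, i < n → i ≠ n - 1 → (δ i s b).1 ≠ acc ∧ (δ i s b).1 ≠ rej

namespace TwoDA

variable {n d : ℕ}

/-- One computation step on input `u`; configurations are (state, head position),
and halting configurations are absorbing. -/
def step (M : TwoDA n d) (u : Fin n → Bool) (c : Fin d × ℕ) : Fin d × ℕ :=
  if c.1 = M.acc ∨ c.1 = M.rej then c
  else ((M.δ c.2 c.1 (readBit u c.2)).1, movePos c.2 (M.δ c.2 c.1 (readBit u c.2)).2)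

/-- The machine accepts `u` if the run from the initial configuration reaches the
accepting state. -/
def accepts (M : TwoDA n d) (u : Fin n → Bool) : Prop :=
  ∃ t : ℕ, ((M.step u)^[t] (M.start, 0)).1 = M.acc

def rejects (M : TwoDA n d) (u : Fin n → Bool) : Prop :=
  ∃ t : ℕ, ((M.step u)^[t] (M.start, 0)).1 = M.rej

/-- A `2DA_n` computes `f` if it accepts each `u` with `f u = true` and rejects each
`u` with `f u = false`. -/
def Computes (M : TwoDA n d) (f : (Fin n → Bool) → Bool) : Prop :=
  ∀ u, (f u = true → M.accepts u) ∧ (f u = false → M.rejects u)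

/-- A shuffling automaton `2DA^Θ_n` computes `f`: for some permutation `θ`, the `j`-th
input symbol is placed on square `θ(j)` and the `2DA_n` computes the resulting function. -/
def ComputesShuffled (M : TwoDA n d) (f : (Fin n → Bool) → Bool) : Prop :=
  ∃ θ : Equiv.Perm (Fin n), M.Computes (fun v => f (fun j => v (θ j)))

end TwoDA

/-- The nondeterministic counterpart `2NA_n` of `2DA_n`. -/
structure TwoNA (n d : ℕ) where
  start : Fin d
  acc : Fin d
  rej : Fin d
  acc_ne_rej : acc ≠ rej
  δ : ℕ → Fin d → Bool → Set (Fin d × Dir)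
  noLeft : ∀ s b r, r ∈ δ 0 s b → r.2 ≠ Dir.L
  noRight : ∀ s b r, r ∈ δ (n - 1) s b → r.2 ≠ Dir.R
  haltRight : ∀ i s b r, i < n → i ≠ n - 1 → r ∈ δ i s b → r.1 ≠ acc ∧ r.1 ≠ rej

namespace TwoNA

variable {n d : ℕ}

/-- One nondeterministic step. -/
def stepRel (M : TwoNA n d) (u : Fin n → Bool) (c c' : Fin d × ℕ) : Prop :=
  c.1 ≠ M.acc ∧ c.1 ≠ M.rej ∧
    ∃ r ∈ M.δ c.2 c.1 (readBit u c.2), c' = (r.1, movePos c.2 r.2)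

/-- Acceptance: some computation path reaches the accepting state. -/
def accepts (M : TwoNA n d) (u : Fin n → Bool) : Prop :=
  ∃ p : ℕ, Relation.ReflTransGen (M.stepRel u) (M.start, 0) (M.acc, p)

/-- A `2NA_n` computes `f` if it accepts exactly the inputs `u` with `f u = true`. -/
def Computes (M : TwoNA n d) (f : (Fin n → Bool) → Bool) : Prop :=
  ∀ u, M.accepts u ↔ f u = true

def ComputesShuffled (M : TwoNA n d) (f : (Fin n → Bool) → Bool) : Prop :=
  ∃ θ : Equiv.Perm (Fin n), M.Computes (fun v => f (fun j => v (θ j)))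

end TwoNA

/-- The probabilistic counterpart `2PA_n`: every transition carries a probability, and
from each non-halting configuration the outgoing probabilities sum to `1`. -/
structure TwoPA (n d : ℕ) where
  start : Fin d
  acc : Fin d
  rej : Fin d
  acc_ne_rej : acc ≠ rej
  δ : ℕ → Fin d → Bool → Fin d × Dir → ENNReal
  sum_one : ∀ i s b, ∑ r : Fin d × Dir, δ i s b r = 1
  noLeft : ∀ s b r, δ 0 s b r ≠ 0 → r.2 ≠ Dir.L
  noRight : ∀ s b r, δ (n - 1) s b r ≠ 0 → r.2 ≠ Dir.R
  haltRight : ∀ i s b r, i < n → i ≠ n - 1 → δ i s b r ≠ 0 → r.1 ≠ acc ∧ r.1 ≠ rej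

namespace TwoPA

variable {n d : ℕ}

/-- One-step transition probability of the Markov chain on configurations
(halting configurations are absorbing). -/
noncomputable def transP (M : TwoPA n d) (u : Fin n → Bool) (c c' : Fin d × ℕ) : ENNReal :=
  if c.1 = M.acc ∨ c.1 = M.rej then (if c' = c then 1 else 0)
  else ∑ r : Fin d × Dir,
    if c' = (r.1, movePos c.2 r.2) then M.δ c.2 c.1 (readBit u c.2) r else 0

/-- Distribution over configurations after `t` steps. -/
noncomputable def dist (M : TwoPA n d) (u : Fin n → Bool) : ℕ → (Fin d × ℕ) → ENNReal
  | 0 => fun c => if c = (M.start, 0) then 1 else 0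
  | t + 1 => fun c' => ∑' c : Fin d × ℕ, M.dist u t c * M.transP u c c'

/-- The probability of eventually halting in the accepting state. -/
noncomputable def accProb (M : TwoPA n d) (u : Fin n → Bool) : ENNReal :=
  ⨆ t : ℕ, ∑' p : ℕ, M.dist u t (M.acc, p)

/-- The probability of eventually halting in the rejecting state. -/
noncomputable def rejProb (M : TwoPA n d) (u : Fin n → Bool) : ENNReal :=
  ⨆ t : ℕ, ∑' p : ℕ, M.dist u t (M.rej, p)

/-- The expected running time (number of steps until halting):
`E[τ] = ∑_t P(τ > t)`. -/
noncomputable def expTime (M : TwoPA n d) (u : Fin n → Bool) : ENNReal :=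
  ∑' t : ℕ, (1 - (∑' p : ℕ, M.dist u t (M.acc, p)) - (∑' p : ℕ, M.dist u t (M.rej, p)))

/-- A `2PA_n` computes `f` with error probability `ε`:
members of `f⁻¹(1)` are accepted and members of `f⁻¹(0)` rejected
with probability at least `1/2 + ε`. -/
def Computes (M : TwoPA n d) (f : (Fin n → Bool) → Bool) (ε : ℝ) : Prop :=
  ∀ u, (f u = true → ENNReal.ofReal (1 / 2 + ε) ≤ M.accProb u) ∧
       (f u = false → ENNReal.ofReal (1 / 2 + ε) ≤ M.rejProb u)

def ComputesShuffled (M : TwoPA n d) (f : (Fin n → Bool) → Bool) (ε : ℝ) : Prop :=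
  ∃ θ : Equiv.Perm (Fin n), M.Computes (fun v => f (fun j => v (θ j))) ε

end TwoPA

/-! ## Subfunctions and the complexity measure `N(f)` -/

/-- Assemble a full input from: a permutation `θ` (so that the variable at the `k`-th
position of the order is `x_{θ(k)}`), an assignment `ρ` to the first `i` variables of
the order, and values `γ` for the remaining `n - i` variables. -/
def assembleInput {n : ℕ} (θ : Equiv.Perm (Fin n)) (i : ℕ) (ρ : Fin i → Bool)
    (γ : Fin (n - i) → Bool) : Fin n → Bool := fun j =>
  if h : (θ.symm j : ℕ) < i then ρ ⟨(θ.symm j : ℕ), h⟩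
  else γ ⟨(θ.symm j : ℕ) - i, by have := (θ.symm j).isLt; omega⟩

/-- `N_i^θ(f)`: the number of distinct subfunctions of `f` obtained by fixing the first
`i` variables (in the order given by `θ`). -/
noncomputable def subfunCount (n : ℕ) (f : (Fin n → Bool) → Bool)
    (θ : Equiv.Perm (Fin n)) (i : ℕ) : ℕ :=
  Set.ncard { g : (Fin (n - i) → Bool) → Bool |
    ∃ ρ : Fin i → Bool, g = fun γ => f (assembleInput θ i ρ γ) }

/-- `N^θ(f) = max_{1 ≤ i ≤ n-1} N_i^θ(f)`. -/
noncomputable def Nperm (n : ℕ) (f : (Fin n → Bool) → Bool) (θ : Equiv.Perm (Fin n)) : ℕ :=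
  (Finset.Icc 1 (n - 1)).sup (subfunCount n f θ)

/-- `N(f) = min_θ N^θ(f)`. -/
noncomputable def Nsub (n : ℕ) (f : (Fin n → Bool) → Bool) : ℕ :=
  ⨅ θ : Equiv.Perm (Fin n), Nperm n f θ

/-! ## Languages: the measure `R_n(L)` -/

/-- `R^r(L_n)`: the number of equivalence classes of strings of length `r`, where
`u ∼ v` iff `u·y ∈ L ↔ v·y ∈ L` for all `y` of length `n - r`; counted as the number
of distinct "extension behaviours". -/
noncomputable def Rr (L : Set (List Bool)) (n r : ℕ) : ℕ :=
  Set.ncard { g : { y : List Bool // y.length = n - r } → Prop |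
    ∃ u : List Bool, u.length = r ∧ g = fun y => (u ++ y.1) ∈ L }

/-- `R_n(L) = max_{1 ≤ r ≤ n-1} R^r(L_n)`. -/
noncomputable def Rn (L : Set (List Bool)) (n : ℕ) : ℕ :=
  (Finset.Icc 1 (n - 1)).sup (Rr L n)

/-! ## Uniform two-way automata (2DFA / 2NFA) -/

/-- Tape alphabet of a uniform two-way automaton: end-markers and input bits. -/
inductive TapeSym : Type
  | lend | rend | bit (b : Bool)
  deriving DecidableEq

/-- The tape of input `w` between end-markers: square `0` holds `⊢`, squares
`1, …, |w|` hold the input, square `|w|+1` holds `⊣`. -/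
def tapeSym (w : List Bool) (p : ℕ) : TapeSym :=
  if p = 0 then TapeSym.lend
  else if h : p - 1 < w.length then TapeSym.bit (w.get ⟨p - 1, h⟩) else TapeSym.rend

/-- A uniform two-way deterministic finite automaton (2DFA) with `d` states. -/
structure TwoDFA (d : ℕ) where
  start : Fin d
  acc : Fin d
  rej : Fin d
  acc_ne_rej : acc ≠ rej
  δ : Fin d → TapeSym → Fin d × Dir

namespace TwoDFA

variable {d : ℕ}

def step (M : TwoDFA d) (w : List Bool) (c : Fin d × ℕ) : Fin d × ℕ :=
  if c.1 = M.acc ∨ c.1 = M.rej then c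
  else ((M.δ c.1 (tapeSym w c.2)).1, movePos c.2 (M.δ c.1 (tapeSym w c.2)).2)

def accepts (M : TwoDFA d) (w : List Bool) : Prop :=
  ∃ t : ℕ, ((M.step w)^[t] (M.start, 0)).1 = M.acc

def rejects (M : TwoDFA d) (w : List Bool) : Prop :=
  ∃ t : ℕ, ((M.step w)^[t] (M.start, 0)).1 = M.rej

/-- A 2DFA recognizes `L` if it accepts every member and rejects every non-member. -/
def Recognizes (M : TwoDFA d) (L : Set (List Bool)) : Prop :=
  ∀ w, (w ∈ L → M.accepts w) ∧ (w ∉ L → M.rejects w)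

end TwoDFA

/-- A uniform two-way nondeterministic finite automaton (2NFA) with `d` states. -/
structure TwoNFA (d : ℕ) where
  start : Fin d
  acc : Fin d
  rej : Fin d
  acc_ne_rej : acc ≠ rej
  δ : Fin d → TapeSym → Set (Fin d × Dir)

namespace TwoNFA

variable {d : ℕ}

def stepRel (M : TwoNFA d) (w : List Bool) (c c' : Fin d × ℕ) : Prop :=
  c.1 ≠ M.acc ∧ c.1 ≠ M.rej ∧
    ∃ r ∈ M.δ c.1 (tapeSym w c.2), c' = (r.1, movePos c.2 r.2)

def accepts (M : TwoNFA d) (w : List Bool) : Prop :=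
  ∃ p : ℕ, Relation.ReflTransGen (M.stepRel w) (M.start, 0) (M.acc, p)

/-- A 2NFA recognizes `L` if it accepts exactly the members of `L`. -/
def Recognizes (M : TwoNFA d) (L : Set (List Bool)) : Prop :=
  ∀ w, M.accepts w ↔ w ∈ L

end TwoNFA

/-! ## Size classes -/

/-- A family of Boolean functions, one for each input length. -/
abbrev BoolFamily : Type := (n : ℕ) → (Fin n → Bool) → Bool

/-- `2DSIZE(d(n))`. -/
def DSIZE (df : ℕ → ℕ) : Set BoolFamily :=
  { f | ∀ n, ∃ dn ≤ df n, ∃ M : TwoDA n dn, M.Computes (f n) }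

/-- `2DΘSIZE(d(n))`. -/
def DSIZEΘ (df : ℕ → ℕ) : Set BoolFamily :=
  { f | ∀ n, ∃ dn ≤ df n, ∃ M : TwoDA n dn, M.ComputesShuffled (f n) }

/-- `2NSIZE(d(n))`. -/
def NSIZE (df : ℕ → ℕ) : Set BoolFamily :=
  { f | ∀ n, ∃ dn ≤ df n, ∃ M : TwoNA n dn, M.Computes (f n) }

/-- `2NΘSIZE(d(n))`. -/
def NSIZEΘ (df : ℕ → ℕ) : Set BoolFamily :=
  { f | ∀ n, ∃ dn ≤ df n, ∃ M : TwoNA n dn, M.ComputesShuffled (f n) }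

/-- `2PSIZE(d(n))`, with error bound `ε` and expected running time at most `T` on
every input. -/
def PSIZE (df : ℕ → ℕ) (ε T : ℝ) : Set BoolFamily :=
  { f | ∀ n, ∃ dn ≤ df n, ∃ M : TwoPA n dn,
      M.Computes (f n) ε ∧ ∀ u, M.expTime u ≤ ENNReal.ofReal T }

/-- `2PΘSIZE(d(n))`, with error bound `ε` and expected running time at most `T` on
every input. -/
def PSIZEΘ (df : ℕ → ℕ) (ε T : ℝ) : Set BoolFamily :=
  { f | ∀ n, ∃ dn ≤ df n, ∃ M : TwoPA n dn,
      M.ComputesShuffled (f n) ε ∧ ∀ u, M.expTime u ≤ ENNReal.ofReal T }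

/-- `2DFASIZE(d(n))`: for each length `n`, a 2DFA with at most `d(n)` states decides
membership of the length-`n` strings. -/
def DFASIZE (df : ℕ → ℕ) : Set (Set (List Bool)) :=
  { L | ∀ n, ∃ dn ≤ df n, ∃ M : TwoDFA dn,
      ∀ w : List Bool, w.length = n → ((w ∈ L → M.accepts w) ∧ (w ∉ L → M.rejects w)) }

/-- `2NFASIZE(d(n))`. -/
def NFASIZE (df : ℕ → ℕ) : Set (Set (List Bool)) :=
  { L | ∀ n, ∃ dn ≤ df n, ∃ M : TwoNFA dn,
      ∀ w : List Bool, w.length = n → (M.accepts w ↔ w ∈ L) }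
/-! ## The shuffled address function `2-SAF_t` and its uniform version -/

namespace SAF

/-- Number of variables in each of the `2t` blocks. -/
def q (n t : ℕ) : ℕ := n / (2 * t)

/-- Number of address variables per block: `⌈log₂ 2t⌉`. -/
def c (t : ℕ) : ℕ := Nat.clog 2 (2 * t)

/-- Number of value variables per block. -/
def b (n t : ℕ) : ℕ := q n t - c t

/-- Given the per-block address function `Adr` and per-block value function `BVal`,
`Ind` finds the minimal block whose address is `a`, and `mkVal a` is the value of
that block (or `none` if no block has address `a`). -/
def mkVal (t : ℕ) (Adr BVal : ℕ → ℕ) (a : ℕ) : Option ℕ :=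
  ((List.range (2 * t)).find? (fun p => Adr p == a)).map BVal

/-- The two-round iteration of the address function:
`Step_2(X,-1) = 2`; `Step_1(X,i) = Val(X, Step_2(X,i-1)) + t`;
`Step_2(X,i) = Val(X, Step_1(X,i))`; result `1` iff `Step_2(X,1) > 0`
(`none`, representing `-1`, gives result `0`). -/
def iterate (t : ℕ) (Val : ℕ → Option ℕ) : Bool :=
  match ((((Val 2).map (· + t)).bind Val).bind (fun a => (Val a).map (· + t))).bind Val with
  | some v => decide (0 < v)
  | none => false

/-- `Adr(X,p) = (∑_{j<c} y^p_j 2^j) mod 2t`, where the address variables of block `p`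
are the first `c` variables of the block. -/
def Adr (n t : ℕ) (X : Fin n → Bool) (p : ℕ) : ℕ :=
  (∑ j ∈ Finset.range (c t), (if readBit X (p * q n t + j) then 2 ^ j else 0)) % (2 * t)

/-- The value of block `p`: the number of `1`s among its value variables, mod `t`. -/
def blockVal (n t : ℕ) (X : Fin n → Bool) (p : ℕ) : ℕ :=
  (∑ j ∈ Finset.range (b n t), (if readBit X (p * q n t + c t + j) then 1 else 0)) % t

/-- `Val(X,a)`: value of the first block with address `a` (`none` meaning `-1`). -/
def Val (n t : ℕ) (X : Fin n → Bool) : ℕ → Option ℕ :=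
  mkVal t (Adr n t X) (blockVal n t X)

end SAF

/-- The Boolean function `2-SAF_t` on `n` variables. -/
def SAFfun (n t : ℕ) (X : Fin n → Bool) : Bool :=
  SAF.iterate t (SAF.Val n t X)

/-- The set of value variables of block `p` (for the `2-SAF_t` layout) inside a set
`A` of variables. -/
def SAF.valueVarsIn (n t : ℕ) (p : ℕ) (A : Finset (Fin n)) : Finset (Fin n) :=
  A.filter (fun x => p * q n t + c t ≤ (x : ℕ) ∧ (x : ℕ) < p * q n t + q n t)

/-- The blocks from which `A` contains at least `t` value variables. -/
def SAF.heavyBlocks (n t : ℕ) (A : Finset (Fin n)) : Finset ℕ :=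
  (Finset.range (2 * t)).filter (fun p => t ≤ (valueVarsIn n t p A).card)

namespace USAF

/-- The data (non-mark) bits of block `p`, as (mark, data) pairs: within a block the
variables in odd (1-based) positions are mark bits, each followed by a data bit. -/
def dataPairs (n t : ℕ) (X : Fin n → Bool) (p : ℕ) : List (Bool × Bool) :=
  (List.range (SAF.q n t / 2)).map
    (fun j => (readBit X (p * SAF.q n t + 2 * j), readBit X (p * SAF.q n t + 2 * j + 1)))

/-- The address bits of block `p`: data bits whose mark bit is `0`, in order. -/
def addrBits (n t : ℕ) (X : Fin n → Bool) (p : ℕ) : List Bool :=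
  ((dataPairs n t X p).filter (fun pr => pr.1 == false)).map Prod.snd

/-- The value bits of block `p`: data bits whose mark bit is `1`, in order. -/
def valBits (n t : ℕ) (X : Fin n → Bool) (p : ℕ) : List Bool :=
  ((dataPairs n t X p).filter (fun pr => pr.1 == true)).map Prod.snd

/-- `Adr(X,p) = (∑_{j<c} y^p_j 2^{c-j-1}) mod 2t`, over the first `c` address bits. -/
def Adr (n t : ℕ) (X : Fin n → Bool) (p : ℕ) : ℕ :=
  (∑ j ∈ Finset.range (SAF.c t),
      (if (addrBits n t X p).getD j false then 2 ^ (SAF.c t - j - 1) else 0)) % (2 * t)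

/-- The value of block `p`: the number of `1`s among its value bits, mod `t`. -/
def blockVal (n t : ℕ) (X : Fin n → Bool) (p : ℕ) : ℕ :=
  ((valBits n t X p).count true) % t

def Val (n t : ℕ) (X : Fin n → Bool) : ℕ → Option ℕ :=
  SAF.mkVal t (Adr n t X) (blockVal n t X)

end USAF

/-- The Boolean function `2-USAF_t` on `n` variables. -/
def USAFfun (n t : ℕ) (X : Fin n → Bool) : Bool :=
  SAF.iterate t (USAF.Val n t X)

/-- The language `2-USAF-L_t`: all binary strings `u` with `2-USAF_t(u) = 1`. -/
def USAFlang (t : ℕ) : Set (List Bool) :=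
  { w : List Bool | USAFfun w.length t (fun i => w.get i) = true }

/-! ## The equality function -/

/-- `EQ(X) = 1` iff `x_i = x_{i + ⌊n/2⌋}` for every `0 ≤ i < ⌊n/2⌋`. -/
def EQfun (n : ℕ) (x : Fin n → Bool) : Bool :=
  decide (∀ i : ℕ, (h : i < n / 2) → x ⟨i, by omega⟩ = x ⟨i + n / 2, by omega⟩)

/-!
Cut the tape between squares `i - 1` and `i`. A run on the tape holding `ρ` followed by `γ`
alternates between stretches on the right part, which only read `γ`, and excursions into the left
part, which only read `ρ` and cannot accept. Hence acceptance depends on `ρ` only through the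
states in which the run from the start first reaches square `i`, and the pairs `(s, s')` such that
an excursion entering square `i - 1` in state `s` can return to square `i` in state `s'`. There are
at most `2 ^ d * 2 ^ (d * d) ≤ 2 ^ ((d + 1) ^ 2)` such summaries, which bounds `N_i^θ(f)` for the
inverse of the shuffling permutation.
-/

theorem Set.ncard_range_le_of_factorsThrough {α β γ : Type*} [Nonempty β] [Finite γ]
    {g : α → β} {Φ : α → γ} (h : g.FactorsThrough Φ) : (Set.range g).ncard ≤ Nat.card γ := by
  classical
  calc (Set.range g).ncard
      ≤ (Set.range (Function.extend Φ g fun _ => Classical.arbitrary β)).ncard := by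
        refine Set.ncard_le_ncard ?_ (Set.toFinite _)
        rintro _ ⟨a, rfl⟩
        exact ⟨Φ a, h.extend_apply _ a⟩
    _ ≤ Nat.card γ := by
        rw [← Nat.card_coe_set_eq]
        exact Finite.card_range_le _

section Subfunctions

variable {n : ℕ}

lemma assembleInput_symm (θ : Equiv.Perm (Fin n)) (i : ℕ) (ρ : Fin i → Bool)
    (γ : Fin (n - i) → Bool) :
    assembleInput θ.symm i ρ γ = fun j => assembleInput (Equiv.refl _) i ρ γ (θ j) :=
  rfl

lemma readBit_assembleInput_of_lt {i p : ℕ} (ρ : Fin i → Bool) (γ γ' : Fin (n - i) → Bool)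
    (hp : p < i) :
    readBit (assembleInput (Equiv.refl _) i ρ γ) p =
      readBit (assembleInput (Equiv.refl _) i ρ γ') p := by
  simp [readBit, assembleInput, hp]

lemma readBit_assembleInput_of_le {i p : ℕ} (ρ ρ' : Fin i → Bool) (γ : Fin (n - i) → Bool)
    (hp : i ≤ p) :
    readBit (assembleInput (Equiv.refl _) i ρ γ) p =
      readBit (assembleInput (Equiv.refl _) i ρ' γ) p := by
  simp [readBit, assembleInput, Nat.not_lt.2 hp]

end Subfunctions

namespace Relation

variable {α : Type*} {r₁ r₂ : α → α → Prop} {L : α → Prop} {s t : α}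

theorem ReflTransGen.of_excursions
    (hout : ∀ a b, ¬ L a → r₁ a b → r₂ a b)
    (hstart : L s → ∀ e, ¬ L e → ReflTransGen (fun a b => L a ∧ r₁ a b) s e →
      ReflTransGen r₂ s e)
    (hcross : ∀ a b e, ¬ L a → r₁ a b → L b → ¬ L e →
      ReflTransGen (fun a b => L a ∧ r₁ a b) b e → ReflTransGen r₂ b e)
    (htarget : ∀ a, L a → ¬ r₁ a t) (h : ReflTransGen r₁ s t) : ReflTransGen r₂ s t := by
  suffices key : (¬ L s → ReflTransGen r₂ s t) ∧ (L s → s = t ∨ ∃ e, ¬ L e ∧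
      ReflTransGen (fun a b => L a ∧ r₁ a b) s e ∧ ReflTransGen r₂ e t) by
    by_cases hs : L s
    · obtain rfl | ⟨e, he, hse, het⟩ := key.2 hs
      · exact .refl
      · exact (hstart hs e he hse).trans het
    · exact key.1 hs
  clear hstart
  induction h using ReflTransGen.head_induction_on with
  | refl => exact ⟨fun _ => .refl, fun _ => .inl rfl⟩
  | @head a c hac _ ih =>
    refine ⟨fun ha => ReflTransGen.head (hout a c ha hac) ?_, fun ha => .inr ?_⟩
    · by_cases hc : L c
      · obtain rfl | ⟨e, he, hce, het⟩ := ih.2 hc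
        · exact .refl
        · exact (hcross a c e ha hac hc he hce).trans het
      · exact ih.1 hc
    · by_cases hc : L c
      · obtain rfl | ⟨e, he, hce, het⟩ := ih.2 hc
        · exact absurd hac (htarget a ha)
        · exact ⟨e, he, hce.head ⟨ha, hac⟩, het⟩
      · exact ⟨c, hc, .single ⟨ha, hac⟩, ih.1 hc⟩

end Relation

namespace TwoNA

open Relation

variable {n d : ℕ}

def leftStep (M : TwoNA n d) (i : ℕ) (u : Fin n → Bool) (c c' : Fin d × ℕ) : Prop :=
  c.2 < i ∧ M.stepRel u c c'

def crossingSummary (M : TwoNA n d) (i : ℕ) (u : Fin n → Bool) :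
    Set (Fin d) × Set (Fin d × Fin d) :=
  ({s | ReflTransGen (M.leftStep i u) (M.start, 0) (s, i)},
    {p | ReflTransGen (M.leftStep i u) (p.1, i - 1) (p.2, i)})

lemma stepRel_congr (M : TwoNA n d) {u u' : Fin n → Bool} {c c' : Fin d × ℕ}
    (h : readBit u c.2 = readBit u' c.2) : M.stepRel u c c' ↔ M.stepRel u' c c' := by
  unfold stepRel; rw [h]

lemma stepRel_snd_le {M : TwoNA n d} {u : Fin n → Bool} {c c' : Fin d × ℕ}
    (h : M.stepRel u c c') : c'.2 ≤ c.2 + 1 ∧ c.2 ≤ c'.2 + 1 := by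
  obtain ⟨-, -, r, -, rfl⟩ := h
  cases r.2 <;> simp only [movePos] <;> omega

lemma leftStep_congr (M : TwoNA n d) {i : ℕ} {u u' : Fin n → Bool}
    (h : ∀ p < i, readBit u p = readBit u' p) : M.leftStep i u = M.leftStep i u' := by
  ext c c'
  exact and_congr_right fun hc => M.stepRel_congr (h c.2 hc)

lemma crossingSummary_congr (M : TwoNA n d) {i : ℕ} {u u' : Fin n → Bool}
    (h : ∀ p < i, readBit u p = readBit u' p) :
    M.crossingSummary i u = M.crossingSummary i u' := by
  rw [crossingSummary, crossingSummary, M.leftStep_congr h]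

lemma snd_eq_of_reflTransGen_leftStep {M : TwoNA n d} {i : ℕ} {u : Fin n → Bool}
    {c e : Fin d × ℕ} (h : ReflTransGen (M.leftStep i u) c e) (hc : c.2 < i) (he : i ≤ e.2) :
    e.2 = i := by
  rcases h.cases_tail with rfl | ⟨x, -, hx, hxe⟩
  · omega
  · have := (stepRel_snd_le hxe).1
    omega

theorem accepts_of_crossingSummary_eq (M : TwoNA n d) {i : ℕ} {u u' : Fin n → Bool} (hi : i < n)
    (hright : ∀ p, i ≤ p → readBit u p = readBit u' p)
    (hsum : M.crossingSummary i u = M.crossingSummary i u') (hu : M.accepts u) :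
    M.accepts u' := by
  obtain ⟨q, hq⟩ := hu
  have exit_eq {c e : Fin d × ℕ} (hce : ReflTransGen (M.leftStep i u) c e) (hc : c.2 < i)
      (he : ¬ e.2 < i) : ∃ s', e = (s', i) :=
    ⟨e.1, Prod.ext rfl (snd_eq_of_reflTransGen_leftStep hce hc (not_lt.1 he))⟩
  have replay {c e : Fin d × ℕ} (h : ReflTransGen (M.leftStep i u') c e) :
      ReflTransGen (M.stepRel u') c e :=
    ReflTransGen.mono (fun _ _ => And.right) _ _ h
  refine ⟨q, ReflTransGen.of_excursions (L := fun c => c.2 < i)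
    (fun a b ha => (M.stepRel_congr (hright a.2 (not_lt.1 ha))).1) ?_ ?_ ?_ hq⟩
  · intro hs e he hse
    obtain ⟨s', rfl⟩ := exit_eq hse hs he
    have : s' ∈ (M.crossingSummary i u).1 := hse
    rw [hsum] at this
    exact replay this
  · rintro ⟨s, p⟩ ⟨s₁, p₁⟩ e ha hab hb he hbe
    obtain ⟨s', rfl⟩ := exit_eq hbe hb he
    obtain rfl : p₁ = i - 1 := by
      have := stepRel_snd_le hab
      dsimp only at ha hb this
      omega
    have : (s₁, s') ∈ (M.crossingSummary i u).2 := hbe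
    rw [hsum] at this
    exact replay this
  · rintro a ha ⟨-, -, r, hr, hrq⟩
    exact (M.haltRight a.2 a.1 _ r (by omega) (by omega) hr).1 (congrArg Prod.fst hrq).symm

theorem subfunCount_le {f : (Fin n → Bool) → Bool} {M : TwoNA n d}
    {θ : Equiv.Perm (Fin n)} (hM : M.Computes (fun v => f (fun j => v (θ j)))) {i : ℕ}
    (hi : i < n) : subfunCount n f θ.symm i ≤ 2 ^ ((d + 1) ^ 2) := by
  set g : (Fin i → Bool) → (Fin (n - i) → Bool) → Bool :=
    fun ρ γ => f (assembleInput θ.symm i ρ γ)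
  have hg : ∀ ρ γ, g ρ γ = true ↔ M.accepts (assembleInput (Equiv.refl _) i ρ γ) :=
    fun ρ γ => by rw [hM]; simp only [g, assembleInput_symm]
  have hfactor : g.FactorsThrough
      fun ρ => M.crossingSummary i (assembleInput (Equiv.refl _) i ρ fun _ => false) := by
    intro ρ₁ ρ₂ hρ
    have hsum : ∀ γ, M.crossingSummary i (assembleInput (Equiv.refl _) i ρ₁ γ) =
        M.crossingSummary i (assembleInput (Equiv.refl _) i ρ₂ γ) := fun γ => by
      rwa [M.crossingSummary_congr fun p hp => readBit_assembleInput_of_lt ρ₁ γ _ hp,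
        M.crossingSummary_congr fun p hp => readBit_assembleInput_of_lt ρ₂ γ _ hp]
    funext γ
    rw [Bool.eq_iff_iff, hg, hg]
    exact ⟨M.accepts_of_crossingSummary_eq hi
        (fun p hp => readBit_assembleInput_of_le ρ₁ ρ₂ γ hp) (hsum γ),
      M.accepts_of_crossingSummary_eq hi
        (fun p hp => readBit_assembleInput_of_le ρ₂ ρ₁ γ hp) (hsum γ).symm⟩
  calc subfunCount n f θ.symm i = (Set.range g).ncard := by
        simp only [subfunCount, Set.range, eq_comm, g]
    _ ≤ Nat.card (Set (Fin d) × Set (Fin d × Fin d)) :=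
        Set.ncard_range_le_of_factorsThrough hfactor
    _ = 2 ^ (d + d * d) := by
        simp [Nat.card_eq_fintype_card, Fintype.card_set, pow_add]
    _ ≤ 2 ^ ((d + 1) ^ 2) := Nat.pow_le_pow_right two_pos (by nlinarith)

end TwoNA

theorem stmt2 (n d : ℕ) (f : (Fin n → Bool) → Bool) (M : TwoNA n d)
    (hM : M.ComputesShuffled f) :
    Nsub n f ≤ 2 ^ ((d + 1) ^ 2) := by
  obtain ⟨θ, hθ⟩ := hM
  refine (ciInf_le (OrderBot.bddBelow _) θ.symm).trans (Finset.sup_le fun i hi => ?_)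
  exact TwoNA.subfunCount_le hθ (by grind)
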